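/- For k ≥ 2, let H be a k-uniform hypergraph on n vertices with m edges satisfying τ(H) = (n + ⌊k/2⌋·m)/⌊3k/2⌋. Then H has no isolated vertex, i.e., every vertex of H lies in at least one edge. -/

import Mathlib

/-- A hypergraph: a finite vertex set together with a finite (indexed, hence
multiset-like) family of edges, each edge a subset of the vertex set. -/
structure FinHypergraph (V : Type*) where
  verts : Finset V
  numEdges : ℕ
  edge : Fin numEdges → Finset V
  edge_sub : ∀ i, edge i ⊆ verts

namespace FinHypergraph

variable {V : Type*} [DecidableEq V]

/-- `H` is `k`-uniform if every edge has exactly `k` vertices. -/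
def Uniform (H : FinHypergraph V) (k : ℕ) : Prop :=
  ∀ i, (H.edge i).card = k

/-- A transversal: a set of vertices meeting every edge. -/
def IsTransversal (H : FinHypergraph V) (T : Finset V) : Prop :=
  T ⊆ H.verts ∧ ∀ i, (T ∩ H.edge i).Nonempty

/-- The transversal number `τ(H)`: minimum size of a transversal. -/
noncomputable def tau (H : FinHypergraph V) : ℕ :=
  sInf {n | ∃ T : Finset V, H.IsTransversal T ∧ T.card = n}

/-- The degree of a vertex: the number of edges containing it. -/
def degree (H : FinHypergraph V) (v : V) : ℕ :=
  (Finset.univ.filter fun i => v ∈ H.edge i).card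

/-- Two vertices are adjacent if some edge contains both. -/
def Adj (H : FinHypergraph V) (u v : V) : Prop :=
  u ≠ v ∧ ∃ i, u ∈ H.edge i ∧ v ∈ H.edge i

/-- `H` is connected if every pair of vertices is joined by a sequence of
consecutively adjacent vertices. -/
def Connected (H : FinHypergraph V) : Prop :=
  ∀ u ∈ H.verts, ∀ v ∈ H.verts, Relation.ReflTransGen H.Adj u v

/-- `H` is (a copy of) `E_k`: `k` vertices and exactly one edge. -/
def IsEk (H : FinHypergraph V) (k : ℕ) : Prop :=
  H.verts.card = k ∧ H.numEdges = 1 ∧ ∀ i, H.edge i = H.verts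

/-- `H` is (a copy of) the generalized triangle `T_k`: the vertex set is the
disjoint union of sets `A`, `B`, `C`, `D` with `|A| = ⌈k/2⌉`,
`|B| = |C| = ⌊k/2⌋`, `|D| = ⌈k/2⌉ - ⌊k/2⌋`, and the edges are exactly
`A ∪ B`, `A ∪ C` and `B ∪ C ∪ D`. -/
def IsTk (H : FinHypergraph V) (k : ℕ) : Prop :=
  ∃ A B C D : Finset V,
    A.card = (k + 1) / 2 ∧ B.card = k / 2 ∧ C.card = k / 2 ∧
    D.card = (k + 1) / 2 - k / 2 ∧
    Disjoint A B ∧ Disjoint A C ∧ Disjoint A D ∧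
    Disjoint B C ∧ Disjoint B D ∧ Disjoint C D ∧
    H.verts = A ∪ B ∪ C ∪ D ∧
    H.numEdges = 3 ∧
    (List.ofFn H.edge : Multiset (Finset V)) = {A ∪ B, A ∪ C, B ∪ C ∪ D}

end FinHypergraph

/-!
If `v` were isolated, deleting it would keep `τ` and `m` and lower `n`, so it suffices to prove
the Chvátal–McDiarmid bound `⌊3k/2⌋ τ ≤ n' + ⌊k/2⌋ m`, where `n'` counts only the vertices that
lie in an edge.

The bound is proved by induction on the (distinct) edges. A vertex of degree at least `3` is put
into the transversal. If all degrees are at most `2`, the vertices of degree `2` are the edges of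
a loopless multigraph on the edges of `H`, of maximum degree at most `k`. A matching `M` of it
gives `|M|` vertices covering `2|M|` edges, so `τ ≤ m - |M|`, and `k m ≤ n' + |D₂|` by double
counting. It remains to show that a multigraph with `|D₂|` edges and maximum degree `k` has a
matching with `|D₂| ≤ ⌊3k/2⌋ |M|`. If some triangle spans at least `k` edges, contract it and use
induction; otherwise a maximum matching works, by a weighting argument.
-/

open Finset

theorem Finset.exists_eq_pair_of_card_eq_two {α : Type*} [DecidableEq α] {s : Finset α} {a : α}
    (hs : #s = 2) (ha : a ∈ s) : ∃ b, a ≠ b ∧ s = {a, b} := by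
  obtain ⟨x, y, hxy, rfl⟩ := card_eq_two.1 hs
  rcases mem_insert.1 ha with rfl | ha
  · exact ⟨y, hxy, rfl⟩
  · rw [mem_singleton.1 ha]
    exact ⟨x, hxy.symm, pair_comm _ _⟩

theorem Finset.card_inter_le_one_of_not_subset {α : Type*} [DecidableEq α] {s t : Finset α}
    (hs : #s = 2) (hst : ¬ s ⊆ t) : #(t ∩ s) ≤ 1 := by
  by_contra! h
  exact hst (inter_eq_right.1 (eq_of_subset_of_card_le inter_subset_right (by omega)))

theorem Finset.disjoint_pair_of_card_inter_le_one {α : Type*} [DecidableEq α] {u v p : α}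
    (huv : u ≠ v) (hup : u ≠ p) (hvp : v ≠ p) {S : Finset α} (hS : #({u, v, p} ∩ S) ≤ 1) :
    Disjoint {u, v} S ∨ Disjoint {u, p} S ∨ Disjoint {v, p} S := by
  by_contra h
  simp only [not_or, not_disjoint_iff, mem_insert, mem_singleton] at h
  have hS' := card_le_one.1 hS
  simp only [mem_inter, mem_insert, mem_singleton] at hS'
  grind

theorem Finset.exists_subset_biUnion_card_le_inter_nonempty {α : Type*} [DecidableEq α]
    (E : Finset (Finset α)) (hE : ∀ e ∈ E, e.Nonempty) :
    ∃ T ⊆ E.biUnion id, #T ≤ #E ∧ ∀ e ∈ E, (T ∩ e).Nonempty := by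
  induction E using Finset.induction_on with
  | empty => exact ⟨∅, empty_subset _, by simp, by simp⟩
  | insert e E he ih =>
    obtain ⟨T, hTE, hT, hTint⟩ := ih fun f hf => hE f (mem_insert_of_mem hf)
    obtain ⟨x, hx⟩ := hE e (mem_insert_self e E)
    refine ⟨insert x T, insert_subset (mem_biUnion.2 ⟨e, mem_insert_self e E, hx⟩)
      (hTE.trans (biUnion_subset_biUnion_of_subset_left _ (subset_insert e E))), ?_, ?_⟩
    · rw [card_insert_of_notMem he]
      exact (card_insert_le x T).trans (by omega)
    · intro f hf
      rcases mem_insert.1 hf with rfl | hf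
      · exact ⟨x, mem_inter.2 ⟨mem_insert_self x T, hx⟩⟩
      · exact (hTint f hf).mono (inter_subset_inter (subset_insert x T) subset_rfl)

theorem Finset.biUnion_filter_notMem_subset_erase {α : Type*} [DecidableEq α]
    (E : Finset (Finset α)) (x : α) : {e ∈ E | x ∉ e}.biUnion id ⊆ (E.biUnion id).erase x :=
  fun y hy => by
    obtain ⟨e, he, hye⟩ := mem_biUnion.1 hy
    exact mem_erase.2 ⟨fun h => (mem_filter.1 he).2 (h ▸ hye),
      mem_biUnion.2 ⟨e, (mem_filter.1 he).1, hye⟩⟩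

/-! A multigraph on `α` is given by a finite set `D` of edge labels and the map `ends` sending a
label to its set of endpoints; it is loopless when `#(ends i) = 2` for all `i ∈ D`. -/

namespace Multigraph

variable {α ι : Type*}

def IsMatching (D : Finset ι) (ends : ι → Finset α) (M : Finset ι) : Prop :=
  M ⊆ D ∧ (M : Set ι).PairwiseDisjoint ends

def IsMaximumMatching (D : Finset ι) (ends : ι → Finset α) (M : Finset ι) : Prop :=
  IsMatching D ends M ∧ ∀ M', IsMatching D ends M' → #M' ≤ #M

theorem exists_isMaximumMatching (D : Finset ι) (ends : ι → Finset α) :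
    ∃ M, IsMaximumMatching D ends M := by
  classical
  obtain ⟨M, hM, hmax⟩ := exists_max_image {M ∈ D.powerset | IsMatching D ends M} card
    ⟨∅, mem_filter.2 ⟨empty_mem_powerset D, empty_subset D, by simp⟩⟩
  exact ⟨M, (mem_filter.1 hM).2, fun M' hM' => hmax M' (mem_filter.2 ⟨mem_powerset.2 hM'.1, hM'⟩)⟩

variable [DecidableEq α]

def degree (D : Finset ι) (ends : ι → Finset α) (x : α) : ℕ := #{i ∈ D | x ∈ ends i}

def touching (M : Finset ι) (ends : ι → Finset α) (s : Finset α) : Finset ι :=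
  {e ∈ M | ¬ Disjoint (ends e) s}

def HasHeavyTriangle (D : Finset ι) (ends : ι → Finset α) (k : ℕ) : Prop :=
  ∃ u v p : α, {u, v} ∈ D.image ends ∧ {u, p} ∈ D.image ends ∧ {v, p} ∈ D.image ends ∧
    k ≤ #{i ∈ D | ends i ⊆ {u, v, p}}

theorem sum_card_inter_eq_sum_degree (D : Finset ι) (ends : ι → Finset α) (s : Finset α) :
    ∑ i ∈ D, #(s ∩ ends i) = ∑ x ∈ s, degree D ends x := by
  simp only [degree, ← filter_mem_eq_inter, card_eq_sum_ones, sum_filter]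
  exact sum_comm

theorem card_touching_le {M : Finset ι} {ends : ι → Finset α}
    (hM : (M : Set ι).PairwiseDisjoint ends) (s : Finset α) : #(touching M ends s) ≤ #s := by
  have hdisj : ((touching M ends s : Finset ι) : Set ι).PairwiseDisjoint (ends · ∩ s) :=
    (hM.subset (coe_subset.2 (filter_subset _ _))).mono fun _ => inter_subset_left
  calc #(touching M ends s)
      ≤ #((touching M ends s).biUnion (ends · ∩ s)) :=
        card_le_card_biUnion hdisj fun _ he => not_disjoint_iff_nonempty_inter.1 (mem_filter.1 he).2
    _ ≤ #s := card_le_card (biUnion_subset.2 fun _ _ => inter_subset_right)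

variable {D : Finset ι} {ends : ι → Finset α} {M : Finset ι} {k : ℕ}

theorem disjoint_of_touching_subset_singleton {e f : ι} {s : Finset α}
    (hs : touching M ends s ⊆ {e}) (hf : f ∈ M) (hfe : f ≠ e) : Disjoint (ends f) s := by
  by_contra h
  exact hfe (mem_singleton.1 (hs (mem_filter.2 ⟨hf, h⟩)))

theorem exists_triangle_of_pairwise_not_disjoint {P : Finset ι} {u v : α}
    (h2 : ∀ i ∈ P, #(ends i) = 2) (hmeet : ∀ i ∈ P, ∀ j ∈ P, ¬ Disjoint (ends i) (ends j))
    (huv : ∀ i ∈ P, ¬ Disjoint {u, v} (ends i) ∧ ¬ {u, v} ⊆ ends i)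
    {i₀ j₀ : ι} (hi₀ : i₀ ∈ P) (hui₀ : u ∉ ends i₀) (hj₀ : j₀ ∈ P) (hvj₀ : v ∉ ends j₀) :
    ∃ q, ends j₀ = {u, q} ∧ ends i₀ = {v, q} ∧ ∀ i ∈ P, ends i ⊆ {u, v, q} := by
  obtain ⟨q, -, hi₀q⟩ := exists_eq_pair_of_card_eq_two (h2 i₀ hi₀) (a := v) (by
    have := (huv i₀ hi₀).1
    simp_all [disjoint_insert_left])
  obtain ⟨q', -, hj₀q⟩ := exists_eq_pair_of_card_eq_two (h2 j₀ hj₀) (a := u) (by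
    have := (huv j₀ hj₀).1
    simp_all [disjoint_insert_left])
  rw [hi₀q] at hui₀
  rw [hj₀q] at hvj₀
  obtain rfl : q' = q := by
    have := hmeet i₀ hi₀ j₀ hj₀
    rw [hi₀q, hj₀q] at this
    simp only [disjoint_insert_left, disjoint_singleton_left, mem_insert, mem_singleton]
      at this hui₀ hvj₀
    grind
  refine ⟨q', hj₀q, hi₀q, fun i hi => ?_⟩
  obtain ⟨hmeet_uv, hnot_sub⟩ := huv i hi
  have hmeet_i₀ := hmeet i hi i₀ hi₀
  have hmeet_j₀ := hmeet i hi j₀ hj₀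
  obtain ⟨x, y, -, hxy⟩ := card_eq_two.1 (h2 i hi)
  rw [hxy] at hmeet_uv hnot_sub hmeet_i₀ hmeet_j₀ ⊢
  rw [hi₀q] at hmeet_i₀
  rw [hj₀q] at hmeet_j₀
  simp only [disjoint_insert_left, disjoint_insert_right, disjoint_singleton_left, mem_insert,
    mem_singleton, insert_subset_iff, singleton_subset_iff]
    at hmeet_uv hnot_sub hmeet_i₀ hmeet_j₀ hui₀ hvj₀ ⊢
  grind

theorem card_lt_degree_of_forall_mem {P : Finset ι} {e : ι} {x : α}
    (hP : P ⊆ D) (he : e ∈ D) (heP : e ∉ P) (hx : x ∈ ends e) (hxP : ∀ i ∈ P, x ∈ ends i) :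
    #P < degree D ends x := by
  classical
  have hsub : insert e P ⊆ {i ∈ D | x ∈ ends i} :=
    insert_subset (mem_filter.2 ⟨he, hx⟩) fun i hi => mem_filter.2 ⟨hP hi, hxP i hi⟩
  have hcard := card_le_card hsub
  rw [card_insert_of_notMem heP] at hcard
  exact hcard

namespace IsMaximumMatching

theorem touching_nonempty (hM : IsMaximumMatching D ends M) {i : ι} (hi : i ∈ D)
    (hne : (ends i).Nonempty) : (touching M ends (ends i)).Nonempty := by
  classical
  by_contra h
  simp only [touching, not_nonempty_iff_eq_empty, filter_eq_empty_iff, not_not] at h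
  have hiM : i ∉ M := fun hiM => hne.ne_empty (disjoint_self.1 (h hiM))
  have hle := hM.2 (insert i M) ⟨insert_subset hi hM.1.1, by
    rw [coe_insert]; exact hM.1.2.insert fun j hj _ => (h hj).symm⟩
  rw [card_insert_of_notMem hiM] at hle
  omega

/-- Otherwise `M - e + i + j` would be a larger matching. -/
theorem not_disjoint_of_touching_subset_singleton (hM : IsMaximumMatching D ends M) {e i j : ι}
    (he : e ∈ M) (hi : i ∈ D) (hj : j ∈ D) (hine : (ends i).Nonempty) (hjne : (ends j).Nonempty)
    (hti : touching M ends (ends i) ⊆ {e}) (htj : touching M ends (ends j) ⊆ {e}) :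
    ¬ Disjoint (ends i) (ends j) := by
  classical
  intro hij
  have hij' : i ≠ j := by rintro rfl; exact hine.ne_empty (disjoint_self.1 hij)
  have hrest : ∀ l, (ends l).Nonempty → touching M ends (ends l) ⊆ {e} →
      l ∉ M.erase e ∧ ∀ f ∈ M.erase e, Disjoint (ends f) (ends l) := by
    intro l hl htl
    have hdisj f (hf : f ∈ M.erase e) : Disjoint (ends f) (ends l) :=
      disjoint_of_touching_subset_singleton htl (mem_of_mem_erase hf) (ne_of_mem_erase hf)
    exact ⟨fun hlM => hl.ne_empty (disjoint_self.1 (hdisj l hlM)), hdisj⟩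
  obtain ⟨hiM, hi_disj⟩ := hrest i hine hti
  obtain ⟨hjM, hj_disj⟩ := hrest j hjne htj
  have hmatch : IsMatching D ends (insert i (insert j (M.erase e))) := by
    refine ⟨insert_subset hi (insert_subset hj ((erase_subset e M).trans hM.1.1)), ?_⟩
    rw [coe_insert, coe_insert]
    refine ((hM.1.2.subset (coe_subset.2 (erase_subset e M))).insert
      fun f hf _ => (hj_disj f hf).symm).insert fun f hf _ => ?_
    rcases hf with rfl | hf
    · exact hij
    · exact (hi_disj f hf).symm
  have hle := hM.2 _ hmatch
  rw [card_insert_of_notMem (by simp [hij', hiM]), card_insert_of_notMem hjM,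
    card_erase_of_mem he] at hle
  have : 0 < #M := card_pos.2 ⟨e, he⟩
  omega

variable [DecidableEq ι]

/-- The edges that touch no edge of `M` but `e` and are not parallel to `e` pairwise meet by
maximality, so they share an end of `e` or lie in a triangle through `e`; either way there are
fewer than `k` of them. -/
theorem card_pendant_lt (h2 : ∀ i ∈ D, #(ends i) = 2) (hdeg : ∀ x, degree D ends x ≤ k)
    (htri : ¬ HasHeavyTriangle D ends k) (hM : IsMaximumMatching D ends M) {e : ι} (he : e ∈ M) :
    #{i ∈ D | touching M ends (ends i) = {e} ∧ ¬ ends e ⊆ ends i} < k := by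
  set P := {i ∈ D | touching M ends (ends i) = {e} ∧ ¬ ends e ⊆ ends i}
  have heD : e ∈ D := hM.1.1 he
  have heP : e ∉ P := fun h => (mem_filter.1 h).2.2 subset_rfl
  have hne : ∀ i ∈ D, (ends i).Nonempty := fun i hi => card_pos.1 (by rw [h2 i hi]; norm_num)
  have hpend : ∀ i ∈ P, ¬ Disjoint (ends e) (ends i) ∧ ¬ ends e ⊆ ends i := by
    intro i hi
    have : e ∈ touching M ends (ends i) := by
      rw [(mem_filter.1 hi).2.1]; exact mem_singleton_self e
    exact ⟨(mem_filter.1 this).2, (mem_filter.1 hi).2.2⟩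
  have hmeet : ∀ i ∈ P, ∀ j ∈ P, ¬ Disjoint (ends i) (ends j) := by
    intro i hi j hj
    obtain ⟨hiD, hti, -⟩ := mem_filter.1 hi
    obtain ⟨hjD, htj, -⟩ := mem_filter.1 hj
    exact hM.not_disjoint_of_touching_subset_singleton he hiD hjD (hne i hiD) (hne j hjD)
      hti.subset htj.subset
  have hcommon : ∀ x ∈ ends e, (∀ i ∈ P, x ∈ ends i) → #P < k := fun x hx hxP =>
    (card_lt_degree_of_forall_mem (filter_subset _ D) heD heP hx hxP).trans_le (hdeg x)
  obtain ⟨u, v, -, hends⟩ := card_eq_two.1 (h2 e heD)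
  by_cases hu : ∀ i ∈ P, u ∈ ends i
  · exact hcommon u (by simp [hends]) hu
  by_cases hv : ∀ i ∈ P, v ∈ ends i
  · exact hcommon v (by simp [hends]) hv
  push Not at hu hv
  obtain ⟨i₀, hi₀, hui₀⟩ := hu
  obtain ⟨j₀, hj₀, hvj₀⟩ := hv
  rw [hends] at hpend
  obtain ⟨q, hj₀q, hi₀q, hPq⟩ := exists_triangle_of_pairwise_not_disjoint
    (fun i hi => h2 i (mem_filter.1 hi).1) hmeet hpend hi₀ hui₀ hj₀ hvj₀
  have hsub : insert e P ⊆ {i ∈ D | ends i ⊆ {u, v, q}} :=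
    insert_subset (mem_filter.2 ⟨heD, by simp [hends, subset_iff]⟩)
      fun i hi => mem_filter.2 ⟨(mem_filter.1 hi).1, hPq i hi⟩
  have hlt : #{i ∈ D | ends i ⊆ {u, v, q}} < k := by
    by_contra! h
    exact htri ⟨u, v, q, mem_image.2 ⟨e, heD, hends⟩,
      mem_image.2 ⟨j₀, (mem_filter.1 hj₀).1, hj₀q⟩, mem_image.2 ⟨i₀, (mem_filter.1 hi₀).1, hi₀q⟩, h⟩
  have hcard := card_le_card hsub
  rw [card_insert_of_notMem heP] at hcard
  omega

/-- An edge touching `c ∈ {1, 2}` edges of `M` gives weight `3 - c` to each of them, hence total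
weight `2`. The edges touching only `e` and not parallel to it are counted by `card_pendant_lt`,
so `e` receives weight at most `2k + (k - 1)`. -/
theorem sum_weight_le (h2 : ∀ i ∈ D, #(ends i) = 2) (hdeg : ∀ x, degree D ends x ≤ k)
    (htri : ¬ HasHeavyTriangle D ends k) (hM : IsMaximumMatching D ends M) {e : ι} (he : e ∈ M) :
    ∑ i ∈ D with e ∈ touching M ends (ends i), (3 - #(touching M ends (ends i)))
      ≤ 2 * (3 * k / 2) := by
  set P := {i ∈ D | touching M ends (ends i) = {e} ∧ ¬ ends e ⊆ ends i}
  have hpoint : ∀ i ∈ D, e ∈ touching M ends (ends i) →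
      3 - #(touching M ends (ends i)) ≤ #(ends e ∩ ends i) + if i ∈ P then 1 else 0 := by
    intro i hiD hei
    have hmeet : 1 ≤ #(ends e ∩ ends i) :=
      card_pos.2 (not_disjoint_iff_nonempty_inter.1 (mem_filter.1 hei).2)
    by_cases h1 : touching M ends (ends i) = {e}
    · rw [h1, card_singleton]
      by_cases hsub : ends e ⊆ ends i
      · rw [inter_eq_left.2 hsub, h2 e (hM.1.1 he)]
        omega
      · rw [if_pos (mem_filter.2 ⟨hiD, h1, hsub⟩)]
        omega
    · have : 2 ≤ #(touching M ends (ends i)) := by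
        by_contra! h
        exact h1 (eq_singleton_iff_unique_mem.2
          ⟨hei, fun f hf => card_le_one.1 (by omega) f hf e hei⟩)
      omega
  have hdeg_e : ∑ x ∈ ends e, degree D ends x ≤ 2 * k := by
    rw [← h2 e (hM.1.1 he), ← smul_eq_mul]
    exact sum_le_card_nsmul _ _ _ fun x _ => hdeg x
  have hP : #P < k := hM.card_pendant_lt h2 hdeg htri he
  calc ∑ i ∈ D with e ∈ touching M ends (ends i), (3 - #(touching M ends (ends i)))
      ≤ ∑ i ∈ D with e ∈ touching M ends (ends i),
          (#(ends e ∩ ends i) + if i ∈ P then 1 else 0) :=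
        sum_le_sum fun i hi => hpoint i (mem_filter.1 hi).1 (mem_filter.1 hi).2
    _ ≤ ∑ i ∈ D, (#(ends e ∩ ends i) + if i ∈ P then 1 else 0) :=
        sum_le_sum_of_subset (filter_subset _ _)
    _ = ∑ x ∈ ends e, degree D ends x + #P := by
        rw [sum_add_distrib, sum_card_inter_eq_sum_degree, ← card_filter, filter_mem_eq_inter,
          inter_eq_right.2 (filter_subset _ D)]
    _ ≤ 2 * (3 * k / 2) := by omega

theorem card_le_mul_card (h2 : ∀ i ∈ D, #(ends i) = 2) (hdeg : ∀ x, degree D ends x ≤ k)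
    (htri : ¬ HasHeavyTriangle D ends k) (hM : IsMaximumMatching D ends M) :
    #D ≤ 3 * k / 2 * #M := by
  set w : ι → ℕ := fun i => 3 - #(touching M ends (ends i))
  have hw : ∀ i ∈ D, 2 ≤ ∑ _e ∈ touching M ends (ends i), w i := by
    intro i hi
    rw [sum_const, smul_eq_mul]
    have hpos := (hM.touching_nonempty hi (card_pos.1 (by rw [h2 i hi]; norm_num))).card_pos
    have hle := (card_touching_le hM.1.2 (ends i)).trans (h2 i hi).le
    simp only [w]
    interval_cases #(touching M ends (ends i)) <;> norm_num
  have hsum := calc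
    2 * #D = ∑ _i ∈ D, 2 := by rw [sum_const, smul_eq_mul, mul_comm]
    _ ≤ ∑ i ∈ D, ∑ _e ∈ touching M ends (ends i), w i := sum_le_sum hw
    _ = ∑ e ∈ M, ∑ i ∈ D with e ∈ touching M ends (ends i), w i :=
        sum_comm' fun i e => by simp only [touching, mem_filter]; tauto
    _ ≤ ∑ _e ∈ M, 2 * (3 * k / 2) := sum_le_sum fun e he => hM.sum_weight_le h2 hdeg htri he
    _ = 2 * (3 * k / 2 * #M) := by rw [sum_const, smul_eq_mul]; ring
  omega

end IsMaximumMatching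

def collapse (T : Finset α) (u x : α) : α := if x ∈ T then u else x

section Collapse

variable {T : Finset α} {u : α}

theorem mem_image_collapse_of_notMem (hu : u ∈ T) {x : α} (hx : x ∉ T) {s : Finset α} :
    x ∈ s.image (collapse T u) ↔ x ∈ s := by
  refine ⟨fun h => ?_, fun h => mem_image.2 ⟨x, h, if_neg hx⟩⟩
  obtain ⟨y, hy, hyx⟩ := mem_image.1 h
  unfold collapse at hyx
  split_ifs at hyx with hyT
  · exact absurd (hyx ▸ hu) hx
  · exact hyx ▸ hy

theorem inter_nonempty_of_mem_image_collapse {x : α} (hx : x ∈ T) {s : Finset α}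
    (h : x ∈ s.image (collapse T u)) : (T ∩ s).Nonempty := by
  obtain ⟨y, hy, hyx⟩ := mem_image.1 h
  unfold collapse at hyx
  split_ifs at hyx with hyT
  · exact ⟨y, mem_inter.2 ⟨hyT, hy⟩⟩
  · exact ⟨y, mem_inter.2 ⟨hyx ▸ hx, hy⟩⟩

theorem card_image_collapse_of_not_subset (hu : u ∈ T) {s : Finset α} (hs : #s = 2)
    (hsT : ¬ s ⊆ T) : #(s.image (collapse T u)) = 2 := by
  refine (card_image_of_injOn fun x hx y hy hxy => ?_).trans hs
  unfold collapse at hxy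
  split_ifs at hxy with hxT hyT hyT
  · exact card_le_one.1 (card_inter_le_one_of_not_subset hs hsT) x (mem_inter.2 ⟨hxT, hx⟩) y
      (mem_inter.2 ⟨hyT, hy⟩)
  · exact absurd (hxy ▸ hu) hyT
  · exact absurd (hxy ▸ hu) hxT
  · exact hxy

theorem two_mul_card_filter_subset_add_sum_le (h2 : ∀ i ∈ D, #(ends i) = 2)
    (hdeg : ∀ x, degree D ends x ≤ k) :
    2 * #{i ∈ D | ends i ⊆ T} + ∑ i ∈ D with ¬ ends i ⊆ T, #(T ∩ ends i) ≤ #T * k := by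
  have hin : ∑ i ∈ D with ends i ⊆ T, #(T ∩ ends i) = 2 * #{i ∈ D | ends i ⊆ T} := by
    rw [mul_comm, ← smul_eq_mul, ← sum_const]
    exact sum_congr rfl fun i hi => by
      rw [inter_eq_right.2 (mem_filter.1 hi).2, h2 i (mem_filter.1 hi).1]
  rw [← hin, sum_filter_add_sum_filter_not, sum_card_inter_eq_sum_degree, ← smul_eq_mul]
  exact sum_le_card_nsmul _ _ _ fun x _ => hdeg x

theorem degree_collapse_le (h2 : ∀ i ∈ D, #(ends i) = 2) (hdeg : ∀ x, degree D ends x ≤ k)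
    (hu : u ∈ T) (hT : #T ≤ 3) (hheavy : k ≤ #{i ∈ D | ends i ⊆ T}) (x : α) :
    degree {i ∈ D | ¬ ends i ⊆ T} (fun i => (ends i).image (collapse T u)) x ≤ k := by
  by_cases hx : x ∈ T
  · have hsum := two_mul_card_filter_subset_add_sum_le (T := T) h2 hdeg
    have hmul : #T * k ≤ 3 * k := Nat.mul_le_mul_right k hT
    calc degree {i ∈ D | ¬ ends i ⊆ T} (fun i => (ends i).image (collapse T u)) x
        ≤ ∑ i ∈ D with ¬ ends i ⊆ T, #(T ∩ ends i) := by
          rw [degree, card_eq_sum_ones]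
          refine (sum_le_sum fun i hi => ?_).trans
            (sum_le_sum_of_subset (filter_subset _ {i ∈ D | ¬ ends i ⊆ T}))
          exact (inter_nonempty_of_mem_image_collapse hx (mem_filter.1 hi).2).card_pos
      _ ≤ k := by omega
  · calc degree {i ∈ D | ¬ ends i ⊆ T} (fun i => (ends i).image (collapse T u)) x
        ≤ degree D ends x := card_le_card fun i hi => by
          simp only [mem_filter, mem_image_collapse_of_notMem hu hx] at hi ⊢
          exact ⟨hi.1.1, hi.2⟩
      _ ≤ k := hdeg x

theorem isMatching_of_isMatching_collapse (h2 : ∀ i ∈ D, #(ends i) = 2) {M : Finset ι}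
    (hM : IsMatching {i ∈ D | ¬ ends i ⊆ T} (fun i => (ends i).image (collapse T u)) M) :
    IsMatching D ends M ∧ #(T ∩ M.biUnion ends) ≤ 1 := by
  have hMD : ∀ i ∈ M, i ∈ D ∧ ¬ ends i ⊆ T := fun i hi => mem_filter.1 (hM.1 hi)
  refine ⟨⟨fun i hi => (hMD i hi).1, fun i hi j hj hij =>
    Disjoint.of_image_finset (hM.2 hi hj hij)⟩, card_le_one.2 fun x hx y hy => ?_⟩
  obtain ⟨hxT, hx⟩ := mem_inter.1 hx
  obtain ⟨hyT, hy⟩ := mem_inter.1 hy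
  obtain ⟨i, hi, hxi⟩ := mem_biUnion.1 hx
  obtain ⟨j, hj, hyj⟩ := mem_biUnion.1 hy
  obtain rfl : i = j := by
    by_contra hij
    exact disjoint_left.1 (hM.2 hi hj hij) (mem_image.2 ⟨x, hxi, if_pos hxT⟩)
      (mem_image.2 ⟨y, hyj, if_pos hyT⟩)
  exact card_le_one.1 (card_inter_le_one_of_not_subset (h2 i (hMD i hi).1) (hMD i hi).2)
    x (mem_inter.2 ⟨hxT, hxi⟩) y (mem_inter.2 ⟨hyT, hyj⟩)

end Collapse

theorem exists_isMatching_insert_of_isMatching_collapse [DecidableEq ι]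
    (h2 : ∀ i ∈ D, #(ends i) = 2) {u v p : α} (huv : {u, v} ∈ D.image ends)
    (hup : {u, p} ∈ D.image ends) (hvp : {v, p} ∈ D.image ends) {M : Finset ι}
    (hM : IsMatching {i ∈ D | ¬ ends i ⊆ {u, v, p}}
      (fun i => (ends i).image (collapse {u, v, p} u)) M) :
    ∃ g ∉ M, IsMatching D ends (insert g M) := by
  obtain ⟨iuv, hiuv, huv⟩ := mem_image.1 huv
  obtain ⟨iup, hiup, hup⟩ := mem_image.1 hup
  obtain ⟨ivp, hivp, hvp⟩ := mem_image.1 hvp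
  have hdistinct : u ≠ v ∧ u ≠ p ∧ v ≠ p := by
    have := h2 iuv hiuv
    have := h2 iup hiup
    have := h2 ivp hivp
    refine ⟨?_, ?_, ?_⟩ <;> rintro rfl <;> simp_all
  obtain ⟨hMD, hMT⟩ := isMatching_of_isMatching_collapse h2 hM
  obtain ⟨g, hgD, hgT, hgM⟩ : ∃ g ∈ D, ends g ⊆ {u, v, p} ∧ Disjoint (ends g) (M.biUnion ends) := by
    rcases disjoint_pair_of_card_inter_le_one hdistinct.1 hdistinct.2.1 hdistinct.2.2 hMT
      with h | h | h
    · exact ⟨iuv, hiuv, by simp [huv, insert_subset_iff], huv ▸ h⟩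
    · exact ⟨iup, hiup, by simp [hup, insert_subset_iff], hup ▸ h⟩
    · exact ⟨ivp, hivp, by simp [hvp], hvp ▸ h⟩
  refine ⟨g, fun hg => (mem_filter.1 (hM.1 hg)).2 hgT, insert_subset hgD hMD.1, ?_⟩
  rw [coe_insert]
  exact hMD.2.insert fun j hj _ => hgM.mono_right (subset_biUnion_of_mem ends hj)

/-- A heavy triangle spans at most `⌊3k/2⌋` edges, and at least `k`, which keeps the degree of
the contracted vertex at most `k`. -/
theorem exists_isMatching_of_hasHeavyTriangle [DecidableEq ι] (h2 : ∀ i ∈ D, #(ends i) = 2)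
    (hdeg : ∀ x, degree D ends x ≤ k) (ht : HasHeavyTriangle D ends k)
    (ih : ∀ D' ⊂ D, ∀ ends' : ι → Finset α, (∀ i ∈ D', #(ends' i) = 2) →
      (∀ x, degree D' ends' x ≤ k) → ∃ M, IsMatching D' ends' M ∧ #D' ≤ 3 * k / 2 * #M) :
    ∃ M, IsMatching D ends M ∧ #D ≤ 3 * k / 2 * #M := by
  obtain ⟨u, v, p, huv, hup, hvp, hheavy⟩ := ht
  set T : Finset α := {u, v, p}
  have hu : u ∈ T := mem_insert_self u _
  obtain ⟨iuv, hiuv, hiuv_ends⟩ := mem_image.1 huv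
  have hD' : {i ∈ D | ¬ ends i ⊆ T} ⊂ D :=
    filter_ssubset.2 ⟨iuv, hiuv, by simp [hiuv_ends, T, insert_subset_iff]⟩
  obtain ⟨M', hM', hcard⟩ := ih _ hD' (fun i => (ends i).image (collapse T u))
    (fun i hi => card_image_collapse_of_not_subset hu (h2 i (mem_filter.1 hi).1)
      (mem_filter.1 hi).2)
    (degree_collapse_le h2 hdeg hu card_le_three hheavy)
  obtain ⟨g, hgM', hM⟩ := exists_isMatching_insert_of_isMatching_collapse h2 huv hup hvp hM'
  refine ⟨insert g M', hM, ?_⟩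
  have hin := two_mul_card_filter_subset_add_sum_le (T := T) h2 hdeg
  have hmul : #T * k ≤ 3 * k := Nat.mul_le_mul_right k card_le_three
  have hsplit := card_filter_add_card_filter_not (s := D) (fun i => ends i ⊆ T)
  rw [card_insert_of_notMem hgM', mul_add_one]
  omega

theorem exists_isMatching_card_le [DecidableEq ι] (D : Finset ι) (ends : ι → Finset α)
    (h2 : ∀ i ∈ D, #(ends i) = 2) (hdeg : ∀ x, degree D ends x ≤ k) :
    ∃ M, IsMatching D ends M ∧ #D ≤ 3 * k / 2 * #M := by
  induction D using Finset.strongInduction generalizing ends with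
  | H D ih =>
    by_cases ht : HasHeavyTriangle D ends k
    · exact exists_isMatching_of_hasHeavyTriangle h2 hdeg ht fun D' hD' ends' => ih D' hD' ends'
    · obtain ⟨M, hM⟩ := exists_isMaximumMatching D ends
      exact ⟨M, hM.1, hM.card_le_mul_card h2 hdeg ht⟩

end Multigraph

section Transversal

variable {V : Type*} [DecidableEq V] {k : ℕ}

theorem degree_filter_mem_le {E : Finset (Finset V)} (hE : ∀ e ∈ E, #e = k) (D : Finset V)
    (e : Finset V) : Multigraph.degree D (fun x => {e ∈ E | x ∈ e}) e ≤ k := by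
  by_cases he : e ∈ E
  · calc Multigraph.degree D (fun x => {e ∈ E | x ∈ e}) e ≤ #e :=
          card_le_card fun x hx => (mem_filter.1 (mem_filter.1 hx).2).2
      _ = k := hE e he
  · exact (card_eq_zero.2 (filter_eq_empty_iff.2 fun x _ hx => he (mem_filter.1 hx).1)).trans_le
      (Nat.zero_le k)

theorem mul_card_le_card_biUnion_add_card_filter {E : Finset (Finset V)} (hE : ∀ e ∈ E, #e = k)
    (hdeg : ∀ x, #{e ∈ E | x ∈ e} ≤ 2) :
    k * #E ≤ #(E.biUnion id) + #{x ∈ E.biUnion id | #{e ∈ E | x ∈ e} = 2} := calc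
  k * #E = ∑ e ∈ E, #(E.biUnion id ∩ e) := by
    rw [mul_comm, ← smul_eq_mul, ← sum_const]
    refine sum_congr rfl fun e he => ?_
    have hsub : e ⊆ E.biUnion id := subset_biUnion_of_mem id he
    rw [inter_eq_right.2 hsub, hE e he]
  _ = ∑ x ∈ E.biUnion id, #{e ∈ E | x ∈ e} := Multigraph.sum_card_inter_eq_sum_degree E id _
  _ ≤ ∑ x ∈ E.biUnion id, (1 + if #{e ∈ E | x ∈ e} = 2 then 1 else 0) :=
    sum_le_sum fun x _ => by have := hdeg x; split_ifs <;> omega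
  _ = #(E.biUnion id) + #{x ∈ E.biUnion id | #{e ∈ E | x ∈ e} = 2} := by
    rw [sum_add_distrib, card_filter, sum_const, smul_eq_mul, mul_one]

/-- The vertices of degree `2` are the edges of a multigraph on `E`; each vertex of a matching
in it meets two edges of `E` that no other vertex of the matching meets. -/
theorem exists_transversal_of_degree_le_two (hk : 0 < k) (E : Finset (Finset V))
    (hE : ∀ e ∈ E, #e = k) (hdeg : ∀ x, #{e ∈ E | x ∈ e} ≤ 2) :
    ∃ T ⊆ E.biUnion id, (∀ e ∈ E, (T ∩ e).Nonempty) ∧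
      3 * k / 2 * #T ≤ #(E.biUnion id) + k / 2 * #E := by
  set S := E.biUnion id
  set ends : V → Finset (Finset V) := fun x => {e ∈ E | x ∈ e}
  set D₂ := {x ∈ S | #(ends x) = 2}
  have h2 : ∀ x ∈ D₂, #(ends x) = 2 := fun x hx => (mem_filter.1 hx).2
  obtain ⟨M, hM, hD₂M⟩ :=
    Multigraph.exists_isMatching_card_le D₂ ends h2 (degree_filter_mem_le hE D₂)
  set C := M.biUnion ends
  have hC : #C = 2 * #M := by
    rw [card_biUnion hM.2, sum_const_nat fun x hx => h2 x (hM.1 hx), mul_comm]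
  have hCE : C ⊆ E := biUnion_subset.2 fun x _ => filter_subset _ E
  obtain ⟨T₂, hT₂S, hT₂, hT₂int⟩ := exists_subset_biUnion_card_le_inter_nonempty (E \ C)
    fun e he => card_pos.1 (by rw [hE e (mem_sdiff.1 he).1]; exact hk)
  refine ⟨M ∪ T₂, union_subset (hM.1.trans (filter_subset _ S))
    (hT₂S.trans (biUnion_subset_biUnion_of_subset_left _ sdiff_subset)), fun e he => ?_, ?_⟩
  · by_cases heC : e ∈ C
    · obtain ⟨x, hxM, hex⟩ := mem_biUnion.1 heC
      exact ⟨x, mem_inter.2 ⟨mem_union_left _ hxM, (mem_filter.1 hex).2⟩⟩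
    · exact (hT₂int e (mem_sdiff.2 ⟨he, heC⟩)).mono
        (inter_subset_inter subset_union_right subset_rfl)
  · have hT : #(M ∪ T₂) + #M ≤ #E := by
      have := card_union_le M T₂
      have := card_sdiff_of_subset hCE
      have := card_le_card hCE
      omega
    have hkE : k * #E ≤ #S + #D₂ := mul_card_le_card_biUnion_add_card_filter hE hdeg
    have hc : 3 * k / 2 = k + k / 2 := by omega
    have := Nat.mul_le_mul_left (3 * k / 2) hT
    rw [hc] at this hD₂M ⊢
    nlinarith

theorem exists_transversal_three_halves_mul_card_le (hk : 0 < k) (E : Finset (Finset V))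
    (hE : ∀ e ∈ E, #e = k) :
    ∃ T ⊆ E.biUnion id, (∀ e ∈ E, (T ∩ e).Nonempty) ∧
      3 * k / 2 * #T ≤ #(E.biUnion id) + k / 2 * #E := by
  induction E using Finset.strongInduction with
  | H E ih =>
    by_cases h3 : ∃ x, 3 ≤ #{e ∈ E | x ∈ e}
    swap
    · push Not at h3
      exact exists_transversal_of_degree_le_two hk E hE fun x => by have := h3 x; omega
    obtain ⟨x, hx⟩ := h3
    obtain ⟨e₀, he₀⟩ := card_pos.1 (three_pos.trans_le hx)
    obtain ⟨he₀E, hxe₀⟩ := mem_filter.1 he₀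
    have hE' : {e ∈ E | x ∉ e} ⊂ E := filter_ssubset.2 ⟨e₀, he₀E, not_not.2 hxe₀⟩
    obtain ⟨T, hTS, hT, hTcard⟩ := ih _ hE' fun e he => hE e (mem_filter.1 he).1
    have hxS : x ∈ E.biUnion id := mem_biUnion.2 ⟨e₀, he₀E, hxe₀⟩
    have hS := biUnion_filter_notMem_subset_erase E x
    refine ⟨insert x T, insert_subset hxS (hTS.trans (hS.trans (erase_subset x _))),
      fun e he => ?_, ?_⟩
    · by_cases hxe : x ∈ e
      · exact ⟨x, mem_inter.2 ⟨mem_insert_self x T, hxe⟩⟩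
      · exact (hT e (mem_filter.2 ⟨he, hxe⟩)).mono
          (inter_subset_inter (subset_insert x T) subset_rfl)
    · have hScard := card_le_card hS
      rw [card_erase_of_mem hxS] at hScard
      have hsplit := card_filter_add_card_filter_not (s := E) (x ∈ ·)
      have hEcard : 3 * (k / 2) + k / 2 * #{e ∈ E | x ∉ e} ≤ k / 2 * #E := by
        have := Nat.mul_le_mul_left (k / 2) (by omega : 3 + #{e ∈ E | x ∉ e} ≤ #E)
        rw [mul_add] at this
        linarith
      -- Adding `x` costs `⌊3k/2⌋ ≤ 1 + 3⌊k/2⌋`: one vertex and at least three edges disappear.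
      have hins : 3 * k / 2 * #(insert x T) ≤ 3 * k / 2 * #T + 3 * k / 2 := by
        rw [← mul_add_one]
        exact Nat.mul_le_mul_left _ (card_insert_le x T)
      have : 0 < #(E.biUnion id) := card_pos.2 ⟨x, hxS⟩
      omega

end Transversal

namespace FinHypergraph

variable {V : Type*} [DecidableEq V] {k : ℕ}

theorem tau_le_card {H : FinHypergraph V} {T : Finset V} (hT : H.IsTransversal T) :
    H.tau ≤ #T :=
  Nat.sInf_le ⟨T, hT, rfl⟩

/-- The Chvátal–McDiarmid bound, with only the non-isolated vertices counted. -/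
theorem three_halves_mul_tau_le (H : FinHypergraph V) (hk : 0 < k) (huni : H.Uniform k) :
    3 * k / 2 * H.tau ≤ #(univ.biUnion H.edge) + k / 2 * H.numEdges := by
  have hS : (univ.image H.edge).biUnion id = univ.biUnion H.edge := by
    rw [image_biUnion]; rfl
  obtain ⟨T, hTS, hT, hTcard⟩ := exists_transversal_three_halves_mul_card_le hk
    (univ.image H.edge) fun e he => by
      obtain ⟨i, -, rfl⟩ := mem_image.1 he
      exact huni i
  rw [hS] at hTS hTcard
  have hTH : H.IsTransversal T :=
    ⟨hTS.trans (biUnion_subset.2 fun i _ => H.edge_sub i),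
      fun i => hT _ (mem_image_of_mem _ (mem_univ i))⟩
  have hm : #(univ.image H.edge) ≤ H.numEdges := card_image_le.trans (by simp)
  calc 3 * k / 2 * H.tau ≤ 3 * k / 2 * #T := Nat.mul_le_mul_left _ (tau_le_card hTH)
    _ ≤ #(univ.biUnion H.edge) + k / 2 * H.numEdges := by
      have := Nat.mul_le_mul_left (k / 2) hm
      omega

theorem card_biUnion_edge_lt_of_degree_eq_zero (H : FinHypergraph V) {v : V} (hv : v ∈ H.verts)
    (h0 : H.degree v = 0) : #(univ.biUnion H.edge) < #H.verts := by
  have hsub : univ.biUnion H.edge ⊆ H.verts.erase v := biUnion_subset.2 fun i _ x hx => by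
    refine mem_erase.2 ⟨?_, H.edge_sub i hx⟩
    rintro rfl
    have : 0 < H.degree x := card_pos.2 ⟨i, mem_filter.2 ⟨mem_univ i, hx⟩⟩
    omega
  have := card_le_card hsub
  rw [card_erase_of_mem hv] at this
  have : 0 < #H.verts := card_pos.2 ⟨v, hv⟩
  omega

end FinHypergraph

/-- For `k ≥ 2`, a `k`-uniform hypergraph achieving equality in the
Chvátal–McDiarmid bound has no isolated vertex: every vertex lies in at
least one edge. -/
theorem stmt10 {V : Type*} [DecidableEq V] (k n m : ℕ) (hk : 2 ≤ k)
    (H : FinHypergraph V) (huni : H.Uniform k)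
    (hn : H.verts.card = n) (hm : H.numEdges = m)
    (heq : (H.tau : ℚ) = ((n : ℚ) + ((k / 2 : ℕ) : ℚ) * (m : ℚ)) / ((3 * k / 2 : ℕ) : ℚ)) :
    ∀ v ∈ H.verts, 0 < H.degree v := by
  subst hn hm
  intro v hv
  by_contra! hv0
  have hsupp := H.card_biUnion_edge_lt_of_degree_eq_zero hv (by omega)
  have htau : 3 * k / 2 * H.tau = #H.verts + k / 2 * H.numEdges := by
    rw [eq_div_iff (Nat.cast_ne_zero.2 (by omega))] at heq
    rw [mul_comm]
    exact_mod_cast heq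
  have hbound := H.three_halves_mul_tau_le (by omega) huni
  omega
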